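/- arXiv:1709.05839 — 4 statements merged into one kernel-verified Lean document; each statement's English description precedes it below -/
import Mathlib

section
/- Every Condorcet-winning budget is exhaustive: if the vote profile V is nonempty and B is a feasible budget that dominates every other feasible budget, then there is no item b ∈ P \ B such that B ∪ {b} is feasible. -/
open Classical

variable {α : Type*} [DecidableEq α]

/-- A vote `v : α → ℕ` ranks item `a` above item `b` iff `v a < v b`.
`v` prefers budget `B` over budget `B'` if `B \ B'` is nonempty and
every item of `B \ B'` is ranked above every item of `B' \ B`. -/
def Prefers (v : α → ℕ) (B B' : Finset α) : Prop :=
  (B \ B').Nonempty ∧ ∀ a ∈ B \ B', ∀ b ∈ B' \ B, v a < v b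

/-- The number of votes in the profile `V` that prefer `B` over `B'`. -/
noncomputable def domCount (V : List (α → ℕ)) (B B' : Finset α) : ℕ :=
  V.countP fun v => decide (Prefers v B B')

/-- `B` dominates `B'` if strictly more than half of the votes prefer `B` over `B'`. -/
def Dominates (V : List (α → ℕ)) (B B' : Finset α) : Prop :=
  2 * domCount V B B' > V.length

/-- `B` weakly dominates `B'` (written `B ⊳ B'`) if `B'` does not dominate `B`. -/
def WeakDom (V : List (α → ℕ)) (B B' : Finset α) : Prop :=
  ¬ Dominates V B' B

/-- A budget `B` is feasible if it consists of proposed items and its total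
cost is within the budget limit `ℓ`. -/
def Feasible (P : Finset α) (cost : α → ℕ) (ℓ : ℕ) (B : Finset α) : Prop :=
  B ⊆ P ∧ ∑ b ∈ B, cost b ≤ ℓ

/-- A Condorcet-winning budget is a feasible budget dominating every other
feasible budget. -/
def CondorcetWinning (P : Finset α) (cost : α → ℕ) (ℓ : ℕ)
    (V : List (α → ℕ)) (B : Finset α) : Prop :=
  Feasible P cost ℓ B ∧
  ∀ B', Feasible P cost ℓ B' → B' ≠ B → Dominates V B B'

theorem not_prefers_of_subset {v : α → ℕ} {B B' : Finset α} (h : B ⊆ B') :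
    ¬ Prefers v B B' :=
  fun hpref => hpref.1.ne_empty (Finset.sdiff_eq_empty_iff_subset.mpr h)

theorem domCount_eq_zero_of_subset (V : List (α → ℕ)) {B B' : Finset α} (h : B ⊆ B') :
    domCount V B B' = 0 :=
  List.countP_eq_zero.mpr fun _ _ hv => not_prefers_of_subset h (of_decide_eq_true hv)

theorem not_dominates_of_subset {V : List (α → ℕ)} (hV : V ≠ []) {B B' : Finset α}
    (h : B ⊆ B') : ¬ Dominates V B B' := by
  have hlen : 0 < V.length := List.length_pos_iff.mpr hV
  simp only [Dominates, domCount_eq_zero_of_subset V h]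
  omega

theorem condorcet_winning_is_exhaustive_general (P : Finset α) (cost : α → ℕ) (ℓ : ℕ)
    (V : List (α → ℕ)) (hVne : V ≠ [])
    (B : Finset α) (hB : CondorcetWinning P cost ℓ V B) :
    ¬ ∃ b, b ∈ P ∧ b ∉ B ∧ Feasible P cost ℓ (insert b B) := by
  rintro ⟨b, -, hbB, hfeas⟩
  exact not_dominates_of_subset hVne (Finset.subset_insert b B)
    (hB.2 _ hfeas (Finset.insert_ne_self.mpr hbB))

/-- every Condorcet-winning budget is exhaustive. -/
theorem condorcet_winning_is_exhaustive (P : Finset α) (cost : α → ℕ) (ℓ : ℕ)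
    (V : List (α → ℕ)) (hVne : V ≠ []) (hV : ∀ v ∈ V, Set.InjOn v ↑P)
    (B : Finset α) (hB : CondorcetWinning P cost ℓ V B) :
    ¬ ∃ b, b ∈ P ∧ b ∉ B ∧ Feasible P cost ℓ (insert b B) :=
  condorcet_winning_is_exhaustive_general P cost ℓ V hVne B hB
end

section
/- (Weak majority path implies domination path.) Let P be a budget proposal, V a vote profile, and ℓ a budget limit with cost(a) ≤ ℓ for every item a ∈ P. For items b, b' ∈ P, if there is a weak majority path b ⇝ b' in the weak majority graph of (P, V), then there is a weak domination path {b} ⊳⊳⊳ {b'}. -/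
open Classical

variable {α : Type*} [DecidableEq α]

/-- Number of votes ranking `a` above `b`. -/
noncomputable def aboveCount (V : List (α → ℕ)) (a b : α) : ℕ :=
  V.countP fun v => decide (v a < v b)

/-- Arc `(a, b)` of the majority graph: a strict majority of the votes rank
`a` above `b`. -/
def MajArc (V : List (α → ℕ)) (a b : α) : Prop :=
  2 * aboveCount V a b > V.length

/-- Arc `(a, b)` of the weak majority graph: either the majority graph has the
arc `(a, b)`, or it has neither arc between `a` and `b`. -/
def WeakMajArc (V : List (α → ℕ)) (a b : α) : Prop :=
  MajArc V a b ∨ (¬ MajArc V a b ∧ ¬ MajArc V b a)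

/-- A weak majority path `a ⇝ b`: a directed path in the weak majority graph
on the vertex set `P`. -/
def WeakMajPath (P : Finset α) (V : List (α → ℕ)) (a b : α) : Prop :=
  Relation.ReflTransGen (fun x y => x ∈ P ∧ y ∈ P ∧ WeakMajArc V x y) a b

/-- A weak domination path `B ⊳⊳⊳ B'`: a finite sequence of feasible budgets
starting at `B` and ending at `B'`, each weakly dominating the next. -/
def WDPath (P : Finset α) (cost : α → ℕ) (ℓ : ℕ) (V : List (α → ℕ)) :
    Finset α → Finset α → Prop :=
  Relation.ReflTransGen
    (fun B B' => Feasible P cost ℓ B ∧ Feasible P cost ℓ B' ∧ WeakDom V B B')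

/-! Along an arc `x → y` of the weak majority graph, no strict majority ranks `y` above `x`.
A vote preferring `{y}` over `{x}` ranks `y` above `x`, so `{y}` cannot dominate `{x}`:
each arc becomes a step `{x} ⊳ {y}` between feasible singletons. -/

theorem List.countP_add_countP_le_length {β : Type*} {p q : β → Bool} {l : List β}
    (h : ∀ x ∈ l, p x → ¬ q x) : l.countP p + l.countP q ≤ l.length := by
  have hq : l.countP q ≤ l.countP (fun x => decide ¬ p x = true) :=
    List.countP_mono_left fun x hx hqx => by simpa using fun hpx => h x hx hpx hqx
  have := List.length_eq_countP_add_countP p (l := l)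
  omega

section

omit [DecidableEq α]

lemma aboveCount_add_aboveCount_le_length (V : List (α → ℕ)) (x y : α) :
    aboveCount V x y + aboveCount V y x ≤ V.length :=
  List.countP_add_countP_le_length fun _ _ hxy hyx => by
    simp only [decide_eq_true_eq] at hxy hyx
    omega

lemma MajArc.not_symm {V : List (α → ℕ)} {x y : α} (h : MajArc V x y) :
    ¬ MajArc V y x := by
  have := aboveCount_add_aboveCount_le_length V x y
  unfold MajArc at *
  omega

lemma WeakMajArc.not_majArc_symm {V : List (α → ℕ)} {x y : α} (h : WeakMajArc V x y) :
    ¬ MajArc V y x :=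
  h.elim MajArc.not_symm And.right

lemma feasible_singleton {P : Finset α} {cost : α → ℕ} {ℓ : ℕ} {x : α} (hx : x ∈ P)
    (hcost : cost x ≤ ℓ) : Feasible P cost ℓ {x} :=
  ⟨Finset.singleton_subset_iff.mpr hx, by simpa using hcost⟩

end

lemma prefers_singleton {v : α → ℕ} {x y : α} (h : Prefers v {x} {y}) : v x < v y := by
  obtain ⟨⟨z, hz⟩, hlt⟩ := h
  obtain ⟨rfl, hzy⟩ : z = x ∧ z ≠ y := by simpa using hz
  exact hlt z (by simp [hzy]) y (by simp [Ne.symm hzy])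

lemma domCount_singleton_le_aboveCount (V : List (α → ℕ)) (x y : α) :
    domCount V {x} {y} ≤ aboveCount V x y :=
  List.countP_mono_left fun _ _ h => by
    simpa using prefers_singleton (of_decide_eq_true h)

lemma weakDom_singleton_of_not_majArc {V : List (α → ℕ)} {x y : α}
    (h : ¬ MajArc V y x) : WeakDom V {x} {y} := by
  have := domCount_singleton_le_aboveCount V y x
  unfold WeakDom Dominates
  unfold MajArc at h
  omega

theorem weak_majority_path_implies_wdpath_general (P : Finset α) (cost : α → ℕ)
    (ℓ : ℕ) (V : List (α → ℕ))
    (hcost : ∀ a ∈ P, cost a ≤ ℓ)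
    (b b' : α)
    (hpath : WeakMajPath P V b b') :
    WDPath P cost ℓ V {b} {b'} :=
  Relation.ReflTransGen.lift (fun x : α => ({x} : Finset α))
    (fun _ _ ⟨hx, hy, harc⟩ =>
      ⟨feasible_singleton hx (hcost _ hx), feasible_singleton hy (hcost _ hy),
        weakDom_singleton_of_not_majArc harc.not_majArc_symm⟩)
    _ _ hpath

/-- weak majority path implies domination path: if every single
item fits within the budget limit and there is a weak majority path
`b ⇝ b'`, then there is a weak domination path `{b} ⊳⊳⊳ {b'}`. -/
theorem weak_majority_path_implies_wdpath (P : Finset α) (cost : α → ℕ)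
    (ℓ : ℕ) (V : List (α → ℕ)) (hV : ∀ v ∈ V, Set.InjOn v ↑P)
    (hcost : ∀ a ∈ P, cost a ≤ ℓ)
    (b b' : α) (hb : b ∈ P) (hb' : b' ∈ P)
    (hpath : WeakMajPath P V b b') :
    WDPath P cost ℓ V {b} {b'} :=
  weak_majority_path_implies_wdpath_general P cost ℓ V hcost b b' hpath
end

section
/- Every greedily pruned budget is exhaustive: if C₁, …, C_z is an ordered partition of P (i.e., the C_i are pairwise disjoint with union P) and B is a greedily pruned budget with respect to C₁, …, C_z and the budget limit ℓ, then B is feasible and there is no item b ∈ P \ B such that B ∪ {b} is feasible. -/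
open Classical

variable {α : Type*} [DecidableEq α]

/-- The union of the first `i` components of an ordered partition. -/
def unionUpTo (Cs : List (Finset α)) (i : ℕ) : Finset α :=
  (Cs.take i).foldr (· ∪ ·) ∅

/-- `B` is greedily pruned with respect to the ordered partition
`C₁, …, C_z` (given as a list `Cs`) and the budget limit `ℓ`: `B` consists of
items of the partition and, for each `i`, `B ∩ C_i` is a maximal subset `S` of
`C_i` such that the cost of `(B ∩ (C₁ ∪ … ∪ C_{i-1})) ∪ S` is at most `ℓ`. -/
def GreedilyPruned (cost : α → ℕ) (ℓ : ℕ) (Cs : List (Finset α))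
    (B : Finset α) : Prop :=
  B ⊆ unionUpTo Cs Cs.length ∧
  ∀ i (hi : i < Cs.length),
    (∑ x ∈ (B ∩ unionUpTo Cs i) ∪ (B ∩ Cs.get ⟨i, hi⟩), cost x) ≤ ℓ ∧
    ∀ S ⊆ Cs.get ⟨i, hi⟩, B ∩ Cs.get ⟨i, hi⟩ ⊆ S →
      (∑ x ∈ (B ∩ unionUpTo Cs i) ∪ S, cost x) ≤ ℓ → S = B ∩ Cs.get ⟨i, hi⟩

/-! Feasibility of `B` is the greedy bound for the last part. If some `b ∈ C_i \ B` could be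
added, then enlarging `B ∩ C_i` by `b` keeps the bound for part `i` (costs are nonnegative, so
this sum is at most that of `B ∪ {b}`), contradicting the maximality of `B ∩ C_i`. -/

lemma List.mem_foldr_union {l : List (Finset α)} {a : α} :
    a ∈ l.foldr (· ∪ ·) ∅ ↔ ∃ C ∈ l, a ∈ C := by
  induction l with
  | nil => simp
  | cons C l ih => simp [ih]

lemma List.foldr_union_eq_union (l : List (Finset α)) (s : Finset α) :
    l.foldr (· ∪ ·) s = l.foldr (· ∪ ·) ∅ ∪ s := by
  induction l with
  | nil => simp
  | cons C l ih => simp [ih, Finset.union_assoc]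

lemma unionUpTo_succ {Cs : List (Finset α)} {i : ℕ} (hi : i < Cs.length) :
    unionUpTo Cs (i + 1) = unionUpTo Cs i ∪ Cs.get ⟨i, hi⟩ := by
  rw [unionUpTo, List.take_add_one, List.getElem?_eq_getElem hi, Option.toList_some,
    List.foldr_append, List.foldr_union_eq_union]
  simp [unionUpTo]

lemma mem_unionUpTo_length {Cs : List (Finset α)} {a : α} :
    a ∈ unionUpTo Cs Cs.length ↔ ∃ i : Fin Cs.length, a ∈ Cs.get i := by
  simp [unionUpTo, List.mem_foldr_union, List.mem_iff_get]

namespace GreedilyPruned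

variable {cost : α → ℕ} {ℓ : ℕ} {Cs : List (Finset α)} {B : Finset α}

lemma sum_inter_unionUpTo_le (h : GreedilyPruned cost ℓ Cs B) :
    ∀ i ≤ Cs.length, ∑ x ∈ B ∩ unionUpTo Cs i, cost x ≤ ℓ
  | 0, _ => by simp [unionUpTo]
  | i + 1, hi => by
    rw [unionUpTo_succ hi, Finset.inter_union_distrib_left]
    exact (h.2 i hi).1

lemma sum_le (h : GreedilyPruned cost ℓ Cs B) : ∑ x ∈ B, cost x ≤ ℓ := by
  simpa [Finset.inter_eq_left.mpr h.1] using h.sum_inter_unionUpTo_le _ le_rfl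

lemma lt_sum_insert (h : GreedilyPruned cost ℓ Cs B) {i : Fin Cs.length} {b : α}
    (hbC : b ∈ Cs.get i) (hbB : b ∉ B) : ℓ < ∑ x ∈ insert b B, cost x := by
  by_contra! hle
  set C := Cs.get i
  have hS : (B ∩ unionUpTo Cs i) ∪ insert b (B ∩ C) ⊆ insert b B := by
    intro x hx
    simp only [Finset.mem_union, Finset.mem_insert, Finset.mem_inter] at hx ⊢
    tauto
  have hmax := (h.2 i i.2).2 (insert b (B ∩ C))
    (Finset.insert_subset hbC Finset.inter_subset_right) (Finset.subset_insert _ _)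
    ((Finset.sum_le_sum_of_subset hS).trans hle)
  exact hbB (Finset.mem_inter.mp (hmax ▸ Finset.mem_insert_self b (B ∩ C))).1

end GreedilyPruned

theorem greedily_pruned_is_exhaustive_general (P : Finset α) (cost : α → ℕ) (ℓ : ℕ)
    (Cs : List (Finset α))
    (hcover : unionUpTo Cs Cs.length = P)
    (B : Finset α) (hgreedy : GreedilyPruned cost ℓ Cs B) :
    Feasible P cost ℓ B ∧
    ¬ ∃ b, b ∈ P ∧ b ∉ B ∧ (∑ x ∈ insert b B, cost x) ≤ ℓ := by
  refine ⟨⟨hcover ▸ hgreedy.1, hgreedy.sum_le⟩, ?_⟩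
  rintro ⟨b, hbP, hbB, hle⟩
  obtain ⟨i, hbC⟩ := mem_unionUpTo_length.mp (hcover ▸ hbP)
  exact (hgreedy.lt_sum_insert hbC hbB).not_ge hle

/-- every greedily pruned budget is exhaustive: if `C₁, …, C_z`
is an ordered partition of `P` (pairwise disjoint with union `P`) and `B` is
greedily pruned w.r.t. it and `ℓ`, then `B` is feasible and no further item of
`P` can be added to `B` without exceeding the limit. -/
theorem greedily_pruned_is_exhaustive (P : Finset α) (cost : α → ℕ) (ℓ : ℕ)
    (Cs : List (Finset α))
    (hdisj : ∀ i j (hi : i < Cs.length) (hj : j < Cs.length), i ≠ j →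
      Disjoint (Cs.get ⟨i, hi⟩) (Cs.get ⟨j, hj⟩))
    (hcover : unionUpTo Cs Cs.length = P)
    (B : Finset α) (hgreedy : GreedilyPruned cost ℓ Cs B) :
    Feasible P cost ℓ B ∧
    ¬ ∃ b, b ∈ P ∧ b ∉ B ∧ (∑ x ∈ insert b B, cost x) ≤ ℓ :=
  greedily_pruned_is_exhaustive_general P cost ℓ Cs hcover B hgreedy
end

section
/- Let A be a finite nonempty set and D an asymmetric binary relation on A (for no a, b do both a D b and b D a hold). Call a nonempty set X ⊆ A dominant if a D b holds for every a ∈ X and every b ∈ A \ X. Then any two dominant sets are comparable by inclusion, and consequently there is a unique minimal dominant set (the Smith set of (A, D)). -/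
def Dominant {A : Type*} (D : A → A → Prop) (X : Set A) : Prop :=
  X.Nonempty ∧ ∀ a ∈ X, ∀ b ∉ X, D a b

theorem IsChain.exists_isLeast {α : Type*} [Preorder α] [WellFoundedLT α] {s : Set α}
    (hs : IsChain (· ≤ ·) s) (hne : s.Nonempty) : ∃ a, IsLeast s a := by
  obtain ⟨a, ha⟩ := exists_minimal_of_wellFoundedLT (· ∈ s) hne
  have hs' : IsChain (· ≥ ·) s := hs.symm
  exact ⟨a, hs'.directedOn.minimal_iff_isLeast.mp ha⟩

section Dominant

variable {A : Type*} (D : A → A → Prop)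

theorem dominant_univ [Nonempty A] : Dominant D Set.univ :=
  ⟨Set.univ_nonempty, fun _ _ _ hb => absurd (Set.mem_univ _) hb⟩

variable {D}

theorem Dominant.subset_or_subset (hasymm : ∀ a b, D a b → ¬ D b a) {X Y : Set A}
    (hX : Dominant D X) (hY : Dominant D Y) : X ⊆ Y ∨ Y ⊆ X := by
  by_contra! h
  obtain ⟨x, hxX, hxY⟩ := Set.not_subset.mp h.1
  obtain ⟨y, hyY, hyX⟩ := Set.not_subset.mp h.2
  exact hasymm x y (hX.2 x hxX y hyX) (hY.2 y hyY x hxY)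

theorem isChain_dominant (hasymm : ∀ a b, D a b → ¬ D b a) :
    IsChain (· ≤ ·) {X : Set A | Dominant D X} :=
  fun _ hX _ hY _ => hX.subset_or_subset hasymm hY

end Dominant

/-- for a finite nonempty set `A` and an asymmetric relation `D`
on `A`, any two dominant sets are comparable by inclusion, and consequently
there is a unique minimal dominant set (the Smith set of `(A, D)`). -/
theorem dominant_sets_chain_and_unique_smith {A : Type*} [Fintype A] [Nonempty A]
    (D : A → A → Prop) (hasymm : ∀ a b, D a b → ¬ D b a) :
    (∀ X Y : Set A, Dominant D X → Dominant D Y → X ⊆ Y ∨ Y ⊆ X) ∧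
    (∃! X : Set A, Dominant D X ∧ ∀ Y : Set A, Dominant D Y → X ⊆ Y) := by
  refine ⟨fun X Y hX hY => hX.subset_or_subset hasymm hY, ?_⟩
  obtain ⟨S, hS⟩ := (isChain_dominant hasymm).exists_isLeast ⟨Set.univ, dominant_univ D⟩
  exact ⟨S, hS, fun T hT => IsLeast.unique (s := {X | Dominant D X}) hT hS⟩
end
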